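/- Let Δ be a simplicial complex on [n] that is not a cone over any vertex, and assume Δ has no free face. Then I_Δ^[2] : I_Δ ⊆ I_Δ^[2] + (x_1 x_2 ⋯ x_n). -/

import Mathlib

open MvPowerSeries Finset

/-- A simplicial complex on `[n]`: contains `∅` and is closed under taking subsets. -/
def IsSimplicialComplex {n : ℕ} (Δ : Set (Finset (Fin n))) : Prop :=
  ∅ ∈ Δ ∧ ∀ F ∈ Δ, ∀ G, G ⊆ F → G ∈ Δ

/-- A facet: a face maximal with respect to inclusion. -/
def IsFacet {n : ℕ} (Δ : Set (Finset (Fin n))) (G : Finset (Fin n)) : Prop :=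
  G ∈ Δ ∧ ∀ H ∈ Δ, G ⊆ H → H = G

/-- A free face: a face `F` such that `F ∪ {i}` is a facet for some `i ∉ F` and
`F ∪ {i}` is the unique facet containing `F`. -/
def IsFreeFace {n : ℕ} (Δ : Set (Finset (Fin n))) (F : Finset (Fin n)) : Prop :=
  F ∈ Δ ∧ ∃ i ∉ F, IsFacet Δ (insert i F) ∧
    ∀ G, IsFacet Δ G → F ⊆ G → G = insert i F

/-- The Stanley–Reisner ideal `I_Δ` in `S = K[[x_1, …, x_n]]`. -/
noncomputable def SRIdeal (K : Type*) [Field K] {n : ℕ} (Δ : Set (Finset (Fin n))) :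
    Ideal (MvPowerSeries (Fin n) K) :=
  Ideal.span ((fun F : Finset (Fin n) => ∏ i ∈ F, (X i : MvPowerSeries (Fin n) K)) ''
    {F | F ∉ Δ})

/-- The second Frobenius power `I_Δ^[2]` in `S = K[[x_1, …, x_n]]`. -/
noncomputable def SRIdeal2 (K : Type*) [Field K] {n : ℕ} (Δ : Set (Finset (Fin n))) :
    Ideal (MvPowerSeries (Fin n) K) :=
  Ideal.span ((fun F : Finset (Fin n) => ∏ i ∈ F, (X i : MvPowerSeries (Fin n) K) ^ 2) ''
    {F | F ∉ Δ})

/-!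
A monomial `x^a` in the support of `f ∈ I_Δ^[2] : I_Δ` that is neither divisible by some
`x_F^2` with `F ∉ Δ` nor by `x_1 ⋯ x_n` has a face `A = {j | a_j ≥ 2}` and a variable `x_i`
missing from it. Without free faces, some facet `H ⊇ A` avoids `i` (otherwise `H \ {i}` would be
free), so `G = H ∪ {i}` is a non-face; `x^a x_G` lies in the support of `f x_G ∈ I_Δ^[2]`, yet
every `F` with `x_F^2 ∣ x^a x_G` lies in `A ∪ ({j | a_j = 1} ∩ G) ⊆ H`, hence is a face.
Membership in the ideals involved is decided monomial by monomial, since they are generated by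
finitely many monomials.
-/

namespace Finsupp

variable {σ : Type*} [DecidableEq σ]

lemma finsetSum_single_apply (F : Finset σ) (k : ℕ) (j : σ) :
    (∑ i ∈ F, single i k) j = if j ∈ F then k else 0 := by
  simp [finsetSum_apply, single_apply]

lemma finsetSum_single_le_iff {F : Finset σ} {k : ℕ} {a : σ →₀ ℕ} :
    ∑ i ∈ F, single i k ≤ a ↔ ∀ i ∈ F, k ≤ a i := by
  refine ⟨fun h i hi => ?_, fun h j => ?_⟩
  · simpa [finsetSum_single_apply, hi] using h i
  · rw [finsetSum_single_apply]
    split_ifs with hj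
    exacts [h j hj, Nat.zero_le _]

end Finsupp

namespace MvPowerSeries

variable {σ R : Type*} [CommSemiring R]

lemma prod_X_pow_eq_monomial (F : Finset σ) (k : ℕ) :
    ∏ i ∈ F, (X i : MvPowerSeries σ R) ^ k = monomial (∑ i ∈ F, Finsupp.single i k) 1 := by
  simp_rw [X_pow_eq, prod_monomial, prod_const_one]

lemma prod_X_eq_monomial (F : Finset σ) :
    ∏ i ∈ F, (X i : MvPowerSeries σ R) = monomial (∑ i ∈ F, Finsupp.single i 1) 1 := by
  simpa using prod_X_pow_eq_monomial (R := R) F 1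

lemma exists_le_of_mem_span_monomial {E : Set (σ →₀ ℕ)} {f : MvPowerSeries σ R}
    (hf : f ∈ Ideal.span ((fun e => monomial e (1 : R)) '' E)) {a : σ →₀ ℕ}
    (ha : coeff a f ≠ 0) : ∃ e ∈ E, e ≤ a := by
  classical
  induction hf using Submodule.span_induction generalizing a with
  | mem _ hx =>
    obtain ⟨e, he, rfl⟩ := hx
    exact ⟨e, he, (eq_of_coeff_monomial_ne_zero ha).ge⟩
  | zero => simp at ha
  | add x y _ _ hx hy =>
    rw [map_add] at ha
    by_cases hxa : coeff a x = 0
    · exact hy (by simpa [hxa] using ha)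
    · exact hx hxa
  | smul r x _ hx =>
    rw [smul_eq_mul, coeff_mul] at ha
    obtain ⟨p, hp, hpa⟩ := Finset.exists_ne_zero_of_sum_ne_zero ha
    obtain ⟨e, he, hle⟩ := hx (right_ne_zero_of_mul hpa)
    exact ⟨e, he, hle.trans ((mem_antidiagonal.mp hp) ▸ le_add_self)⟩

lemma monomial_one_dvd_of_forall_coeff_ne_zero {e : σ →₀ ℕ} {f : MvPowerSeries σ R}
    (hf : ∀ a, coeff a f ≠ 0 → e ≤ a) : monomial e (1 : R) ∣ f := by
  let quotient : MvPowerSeries σ R := fun b => coeff (b + e) f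
  refine ⟨quotient, ext fun a => ?_⟩
  rw [coeff_monomial_mul, one_mul]
  split_ifs with hea
  · exact congrArg (coeff · f) (tsub_add_cancel_of_le hea).symm
  · by_contra hfa
    exact hea (hf a hfa)

lemma mem_ideal_of_forall_exists_le {I : Ideal (MvPowerSeries σ R)} (E : Finset (σ →₀ ℕ))
    (hE : ∀ e ∈ E, monomial e (1 : R) ∈ I) {f : MvPowerSeries σ R}
    (hf : ∀ a, coeff a f ≠ 0 → ∃ e ∈ E, e ≤ a) : f ∈ I := by
  classical
  induction E using Finset.induction generalizing f with
  | empty =>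
    convert I.zero_mem
    ext a
    by_contra ha
    simpa using hf a ha
  | insert e₀ E _ ih =>
    let above : MvPowerSeries σ R := fun a => if e₀ ≤ a then coeff a f else 0
    let below : MvPowerSeries σ R := fun a => if e₀ ≤ a then 0 else coeff a f
    have hsplit : f = above + below := by
      ext a
      change coeff a f =
        (if e₀ ≤ a then coeff a f else 0) + (if e₀ ≤ a then 0 else coeff a f)
      split_ifs <;> simp
    have habove : above ∈ I := by
      refine I.mem_of_dvd (monomial_one_dvd_of_forall_coeff_ne_zero fun a ha => ?_)
        (hE e₀ (mem_insert_self e₀ E))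
      by_contra hea
      exact ha (if_neg hea)
    have hbelow : below ∈ I := by
      refine ih (fun e he => hE e (mem_insert_of_mem he)) fun a ha => ?_
      change (if e₀ ≤ a then 0 else coeff a f) ≠ 0 at ha
      split_ifs at ha with hea
      · exact absurd rfl ha
      obtain ⟨e, he, hle⟩ := hf a ha
      rcases mem_insert.mp he with rfl | he
      exacts [absurd hle hea, ⟨e, he, hle⟩]
    exact hsplit ▸ I.add_mem habove hbelow

end MvPowerSeries

section SimplicialComplex

variable {n : ℕ} {Δ : Set (Finset (Fin n))}

lemma exists_isFacet_superset {F : Finset (Fin n)} (hF : F ∈ Δ) :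
    ∃ H, IsFacet Δ H ∧ F ⊆ H := by
  obtain ⟨H, hFH, hH⟩ := Finite.exists_le_maximal (p := (· ∈ Δ)) hF
  exact ⟨H, ⟨hH.prop, fun H' hH' hHH' => (hH.le_of_ge hH' hHH').antisymm hHH'⟩, hFH⟩

lemma isFreeFace_erase (hΔ : IsSimplicialComplex Δ) {H : Finset (Fin n)} (hH : IsFacet Δ H)
    {i : Fin n} (hi : i ∈ H) (hfacet : ∀ G, IsFacet Δ G → H.erase i ⊆ G → i ∈ G) :
    IsFreeFace Δ (H.erase i) := by
  refine ⟨hΔ.2 H hH.1 _ (erase_subset i H), i, notMem_erase i H, ?_, fun G hG hHG => ?_⟩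
  · rwa [insert_erase hi]
  · rw [insert_erase hi]
    have hHG' : H ⊆ G := insert_erase hi ▸ insert_subset (hfacet G hG hHG) hHG
    exact hH.2 G hG.1 hHG'

lemma exists_notMem_union_inter_mem (hΔ : IsSimplicialComplex Δ)
    (hfree : ¬ ∃ F, IsFreeFace Δ F) {A B : Finset (Fin n)} (hA : A ∈ Δ) {i : Fin n}
    (hiA : i ∉ A) (hiB : i ∉ B) : ∃ G ∉ Δ, A ∪ (B ∩ G) ∈ Δ := by
  obtain ⟨H, hH, hAH, hiH⟩ : ∃ H, IsFacet Δ H ∧ A ⊆ H ∧ i ∉ H := by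
    by_contra! hfacet
    obtain ⟨H, hH, hAH⟩ := exists_isFacet_superset hA
    have hAH' : A ⊆ H.erase i := subset_erase.mpr ⟨hAH, hiA⟩
    exact hfree ⟨_, isFreeFace_erase hΔ hH (hfacet H hH hAH) fun G hG hHG =>
      hfacet G hG (hAH'.trans hHG)⟩
  refine ⟨insert i H, fun hiH' => hiH ?_, hΔ.2 H hH.1 _ ?_⟩
  · exact hH.2 _ hiH' (subset_insert i H) ▸ mem_insert_self i H
  · intro j hj
    simp only [mem_union, mem_inter, mem_insert] at hj
    rcases hj with hj | ⟨hjB, rfl | hj⟩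
    exacts [hAH hj, absurd hjB hiB, hj]

end SimplicialComplex

lemma SRIdeal2_eq_span_monomial (K : Type*) [Field K] {n : ℕ} (Δ : Set (Finset (Fin n))) :
    SRIdeal2 K Δ = Ideal.span ((fun e => monomial e (1 : K)) ''
      ((fun F : Finset (Fin n) => ∑ i ∈ F, Finsupp.single i 2) '' {F | F ∉ Δ})) := by
  rw [SRIdeal2, Set.image_image]
  simp_rw [prod_X_pow_eq_monomial]

lemma coeff_eq_zero_of_mem_colon {K : Type*} [Field K] {n : ℕ} {Δ : Set (Finset (Fin n))}
    (hΔ : IsSimplicialComplex Δ) (hfree : ¬ ∃ F, IsFreeFace Δ F)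
    {f : MvPowerSeries (Fin n) K} (hf : f ∈ Submodule.colon (SRIdeal2 K Δ) (SRIdeal K Δ))
    {a : Fin n →₀ ℕ} (hA : univ.filter (fun j => 2 ≤ a j) ∈ Δ) {i : Fin n}
    (hi : a i = 0) :
    coeff a f = 0 := by
  by_contra ha
  obtain ⟨G, hG, hface⟩ := exists_notMem_union_inter_mem hΔ hfree hA
    (B := univ.filter (fun j => a j = 1)) (i := i) (by simp [hi]) (by simp [hi])
  have hfG : f * ∏ j ∈ G, X j ∈ SRIdeal2 K Δ :=
    Submodule.mem_colon.mp hf _ (Ideal.subset_span ⟨G, hG, rfl⟩)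
  have hcoeff : coeff (a + ∑ j ∈ G, Finsupp.single j 1) (f * ∏ j ∈ G, X j) ≠ 0 := by
    rwa [prod_X_eq_monomial, coeff_add_mul_monomial, mul_one]
  rw [SRIdeal2_eq_span_monomial] at hfG
  obtain ⟨_, ⟨F, hF, rfl⟩, hle⟩ := exists_le_of_mem_span_monomial hfG hcoeff
  refine hF (hΔ.2 _ hface F fun j hj => ?_)
  have h2 := Finsupp.finsetSum_single_le_iff.mp hle j hj
  rw [Finsupp.add_apply, Finsupp.finsetSum_single_apply] at h2
  simp only [mem_union, mem_inter, mem_filter, mem_univ, true_and]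
  split_ifs at h2 with hjG
  · rcases Nat.lt_or_ge (a j) 2 with hlt | hge
    exacts [Or.inr ⟨by omega, hjG⟩, Or.inl hge]
  · exact Or.inl (by omega)

theorem stmt_2_general (K : Type*) [Field K] {n : ℕ} (Δ : Set (Finset (Fin n)))
    (hΔ : IsSimplicialComplex Δ)
    (hfree : ¬ ∃ F, IsFreeFace Δ F) :
    Submodule.colon (SRIdeal2 K Δ) (SRIdeal K Δ) ≤
      SRIdeal2 K Δ ⊔ Ideal.span {∏ i : Fin n, (X i : MvPowerSeries (Fin n) K)} := by
  classical
  intro f hf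
  refine mem_ideal_of_forall_exists_le (insert (∑ i : Fin n, Finsupp.single i 1)
    ((univ.filter (· ∉ Δ)).image fun F => ∑ i ∈ F, Finsupp.single i 2)) ?_ fun a ha => ?_
  · intro e he
    simp only [mem_insert, mem_image, mem_filter, mem_univ, true_and] at he
    rcases he with rfl | ⟨F, hF, rfl⟩
    · rw [← prod_X_eq_monomial]
      exact Ideal.mem_sup_right (Ideal.mem_span_singleton_self _)
    · rw [← prod_X_pow_eq_monomial]
      exact Ideal.mem_sup_left (Ideal.subset_span ⟨F, hF, rfl⟩)
  by_cases hA : univ.filter (fun j => 2 ≤ a j) ∈ Δ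
  · refine ⟨_, mem_insert_self _ _, Finsupp.finsetSum_single_le_iff.mpr fun i _ => ?_⟩
    by_contra! hi
    exact ha (coeff_eq_zero_of_mem_colon hΔ hfree hf hA (Nat.lt_one_iff.mp hi))
  · refine ⟨_, mem_insert_of_mem (mem_image_of_mem _ (by simpa using hA)), ?_⟩
    exact Finsupp.finsetSum_single_le_iff.mpr fun j hj => (mem_filter.mp hj).2

/-- If Δ is not a cone over any vertex and has no free face, then
`I_Δ^[2] : I_Δ ⊆ I_Δ^[2] + (x_1 ⋯ x_n)`. -/
theorem stmt_2 (K : Type*) [Field K] {n : ℕ} (Δ : Set (Finset (Fin n)))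
    (hΔ : IsSimplicialComplex Δ)
    (hcone : ∀ i : Fin n, ¬ ∀ F ∈ Δ, insert i F ∈ Δ)
    (hfree : ¬ ∃ F, IsFreeFace Δ F) :
    Submodule.colon (SRIdeal2 K Δ) (SRIdeal K Δ) ≤
      SRIdeal2 K Δ ⊔ Ideal.span {∏ i : Fin n, (X i : MvPowerSeries (Fin n) K)} :=
  stmt_2_general K Δ hΔ hfree
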